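/- Let n ≥ 1, let v : ℝ → Mₙ(ℝ) be continuous with v(x) symmetric for every x and v(x) = 0 for x > s (s > 0), let k > 0 and λ = k². Suppose u : [0,∞) → Mₙ(ℝ) is a twice differentiable real matrix solution of −u″(x) + v(x)u(x) = λ u(x) with u(0) = I and u′(0) = 0, and suppose A, B ∈ Mₙ(ℂ) satisfy u(x) = e^{ikx}·A + e^{−ikx}·B for all x > s. Then B = conj(A) (the entrywise complex conjugate of A) and AᵀB = BᵀA. -/

import Mathlib

/-! The matrix Wronskian `W = uᵀ u' - u'ᵀ u` has derivative `uᵀ u'' - u''ᵀ u = uᵀ (v - vᵀ) u = 0`,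
so it keeps its value `0` from `x = 0`. Beyond `s`, substituting `u = e^{ikx} A + e^{-ikx} B` turns
`W = 0` into `2ik (BᵀA - AᵀB) = 0`. Since `u` is real, `u = e^{-ikx} conj A + e^{ikx} conj B` as
well, and the two plane waves are independent on every half-line, so `B = conj A`. -/

open Matrix

namespace Matrix

variable {l m n R : Type*}

def wronskian [Fintype m] [CommRing R] (U V : Matrix m n R) : Matrix n n R :=
  Uᵀ * V - Vᵀ * U

section Algebra

variable [Fintype m] [CommRing R]

theorem wronskian_map {S : Type*} [CommRing S] (f : R →+* S) (U V : Matrix m n R) :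
    (wronskian U V).map f = wronskian (U.map f) (V.map f) := by
  simp [wronskian, Matrix.map_sub, Matrix.map_mul, transpose_map]

theorem wronskian_mul_sub_smul_self {V : Matrix m m R} (hV : V.IsSymm) (U : Matrix m n R) (c : R) :
    wronskian U (V * U - c • U) = 0 := by
  simp only [wronskian, transpose_sub, transpose_smul, transpose_mul, hV.eq, Matrix.mul_sub,
    Matrix.sub_mul, Matrix.mul_smul, Matrix.smul_mul, Matrix.mul_assoc, sub_self]

theorem wronskian_smul_add_smul (A B : Matrix m n R) (z w c : R) :
    wronskian (z • A + w • B) (c • (z • A - w • B)) = (2 * c * z * w) • (Bᵀ * A - Aᵀ * B) := by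
  simp only [wronskian, transpose_add, transpose_sub, transpose_smul, Matrix.add_mul,
    Matrix.mul_add, Matrix.sub_mul, Matrix.mul_sub, Matrix.smul_mul, Matrix.mul_smul, smul_smul]
  module

end Algebra

section Calculus

variable {𝕜 : Type*} [NontriviallyNormedField 𝕜] [Fintype m] {s : Set 𝕜} {x : 𝕜}

theorem hasDerivWithinAt_mul_apply {P : 𝕜 → Matrix l m 𝕜} {Q : 𝕜 → Matrix m n 𝕜}
    {P' : Matrix l m 𝕜} {Q' : Matrix m n 𝕜}
    (hP : ∀ i j, HasDerivWithinAt (fun t => P t i j) (P' i j) s x)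
    (hQ : ∀ i j, HasDerivWithinAt (fun t => Q t i j) (Q' i j) s x) (i : l) (j : n) :
    HasDerivWithinAt (fun t => (P t * Q t) i j) ((P' * Q x + P x * Q') i j) s x := by
  simp only [mul_apply, add_apply, ← Finset.sum_add_distrib]
  exact HasDerivWithinAt.fun_sum fun k _ => (hP i k).mul (hQ k j)

theorem hasDerivWithinAt_wronskian_apply {u u' : 𝕜 → Matrix m n 𝕜} {U'' : Matrix m n 𝕜}
    (hu : ∀ i j, HasDerivWithinAt (fun t => u t i j) (u' x i j) s x)
    (hu' : ∀ i j, HasDerivWithinAt (fun t => u' t i j) (U'' i j) s x) (i j : n) :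
    HasDerivWithinAt (fun t => wronskian (u t) (u' t) i j) (wronskian (u x) U'' i j) s x := by
  have huT : ∀ i j, HasDerivWithinAt (fun t => (u t)ᵀ i j) ((u' x)ᵀ i j) s x := fun i j => hu j i
  have hu'T : ∀ i j, HasDerivWithinAt (fun t => (u' t)ᵀ i j) (U''ᵀ i j) s x := fun i j => hu' j i
  refine ((hasDerivWithinAt_mul_apply huT hu' i j).sub
    (hasDerivWithinAt_mul_apply hu'T hu i j)).congr_deriv ?_
  simp only [wronskian, add_apply, sub_apply]
  ring

theorem wronskian_eq_zero_of_hasDerivWithinAt {u u' u'' : ℝ → Matrix m n ℝ} {a : ℝ}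
    (hu : ∀ x ∈ Set.Ici a, ∀ i j, HasDerivWithinAt (fun t => u t i j) (u' x i j) (Set.Ici a) x)
    (hu' : ∀ x ∈ Set.Ici a, ∀ i j, HasDerivWithinAt (fun t => u' t i j) (u'' x i j) (Set.Ici a) x)
    (h'' : ∀ x ∈ Set.Ici a, wronskian (u x) (u'' x) = 0) (ha : wronskian (u a) (u' a) = 0) :
    ∀ x ∈ Set.Ici a, wronskian (u x) (u' x) = 0 := by
  intro x hx
  ext i j
  have hderiv : ∀ y ∈ Set.Ici a,
      HasDerivWithinAt (fun t => wronskian (u t) (u' t) i j) 0 (Set.Ici a) y := fun y hy => by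
    simpa [h'' y hy] using hasDerivWithinAt_wronskian_apply (hu y hy) (hu' y hy) i j
  have hconst := constant_of_has_deriv_right_zero
    (fun y hy => (hderiv y hy.1).continuousWithinAt.mono Set.Icc_subset_Ici_self)
    (fun y hy => (hderiv y hy.1).mono (Set.Ici_subset_Ici.mpr hy.1)) x ⟨hx, le_rfl⟩
  simpa [ha] using hconst

end Calculus

end Matrix

open Complex ComplexConjugate
open scoped Real

section PlaneWave

variable {m n : Type*} {k s : ℝ}

theorem eq_zero_of_forall_exp_smul_add_exp_smul_eq_zero {M : Type*} [AddCommGroup M] [Module ℂ M]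
    (hk : 0 < k) {p q : M}
    (h : ∀ x : ℝ, s < x → exp (I * k * x) • p + exp (-(I * k * x)) • q = 0) :
    p = 0 ∧ q = 0 := by
  have hquarter : 0 < π / (2 * k) := by positivity
  have h₁ := h (s + 1) (by linarith)
  have h₂ := h (s + 1 + π / (2 * k)) (by linarith)
  -- a quarter period later the two waves have been multiplied by `I` and `-I`
  have hshift : I * k * ((s + 1 + π / (2 * k) : ℝ) : ℂ) = I * k * (s + 1 : ℝ) + π / 2 * I := by
    have : (k : ℂ) ≠ 0 := by exact_mod_cast hk.ne'
    push_cast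
    field_simp
  rw [hshift, neg_add, exp_add, exp_add, Complex.exp_neg ((π : ℂ) / 2 * I), exp_pi_div_two_mul_I,
    inv_I] at h₂
  set e := exp (I * k * (s + 1 : ℝ))
  set f := exp (-(I * k * (s + 1 : ℝ)))
  have h₂' : e • p - f • q = 0 := by
    have : I • (e • p - f • q) = 0 := by rw [← h₂]; module
    exact (smul_eq_zero.mp this).resolve_left I_ne_zero
  have hp : (2 * e) • p = 0 := by linear_combination (norm := module) h₁ + h₂'
  have hq : (2 * f) • q = 0 := by linear_combination (norm := module) h₁ - h₂'
  exact ⟨(smul_eq_zero.mp hp).resolve_left (by simp [e]),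
    (smul_eq_zero.mp hq).resolve_left (by simp [f])⟩

theorem eq_map_conj_of_forall_map_ofReal_eq (hk : 0 < k) (U : ℝ → Matrix m n ℝ)
    {A B : Matrix m n ℂ}
    (hU : ∀ x : ℝ, s < x → (U x).map ofReal = exp (I * k * x) • A + exp (-(I * k * x)) • B) :
    B = A.map conj := by
  have hreal : ∀ x : ℝ, s < x → exp (I * k * x) • (A - B.map conj)
      + exp (-(I * k * x)) • (B - A.map conj) = 0 := by
    intro x hx
    have hfix : ((U x).map ofReal).map conj = (U x).map ofReal := by ext; simp
    rw [hU x hx] at hfix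
    ext i j
    have hij := congrFun₂ hfix i j
    simp only [map_apply, Matrix.add_apply, Matrix.smul_apply, smul_eq_mul, map_add, map_mul,
      ← Complex.exp_conj, map_neg, conj_I, conj_ofReal, neg_mul, neg_neg] at hij
    simp only [Matrix.add_apply, Matrix.smul_apply, Matrix.sub_apply, map_apply, smul_eq_mul,
      Matrix.zero_apply]
    linear_combination -hij
  exact (sub_eq_zero.mp (eq_zero_of_forall_exp_smul_add_exp_smul_eq_zero hk hreal).2)

theorem hasDerivAt_exp_mul_add_exp_mul (k : ℝ) (a b : ℂ) (x : ℝ) :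
    HasDerivAt (fun t : ℝ => exp (I * k * t) * a + exp (-(I * k * t)) * b)
      (I * k * (exp (I * k * x) * a - exp (-(I * k * x)) * b)) x := by
  have hphase : HasDerivAt (fun t : ℝ => I * k * (t : ℂ)) (I * k) x := by
    simpa using (ofRealCLM.hasDerivAt (x := x)).const_mul (I * k)
  exact ((hphase.cexp.mul_const a).add (hphase.fun_neg.cexp.mul_const b)).congr_deriv (by ring)

theorem map_ofReal_eq_of_hasDerivAt {u : ℝ → Matrix m n ℝ} {u' : Matrix m n ℝ} {x : ℝ}
    {A B : Matrix m n ℂ} (hx : s < x) (hu : ∀ i j, HasDerivAt (fun t => u t i j) (u' i j) x)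
    (hrep : ∀ y : ℝ, s < y → (u y).map ofReal = exp (I * k * y) • A + exp (-(I * k * y)) • B) :
    u'.map ofReal = (I * k) • (exp (I * k * x) • A - exp (-(I * k * x)) • B) := by
  ext i j
  have hev : (fun t : ℝ => (u t i j : ℂ)) =ᶠ[nhds x]
      fun t => exp (I * k * t) * A i j + exp (-(I * k * t)) * B i j :=
    Filter.eventually_of_mem (Ioi_mem_nhds hx) fun y hy => by
      simpa using congrFun₂ (hrep y hy) i j
  have hwave := (hasDerivAt_exp_mul_add_exp_mul k (A i j) (B i j) x).congr_of_eventuallyEq hev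
  simpa [mul_sub, mul_assoc] using (hu i j).ofReal_comp.unique hwave

end PlaneWave

theorem coefficients_conjugate_and_pseudo_commute_general (n : ℕ)
    (s : ℝ)
    (v : ℝ → Matrix (Fin n) (Fin n) ℝ)
    (hv_symm : ∀ x, (v x)ᵀ = v x)
    (k : ℝ) (hk : 0 < k) (lam : ℝ)
    (u u' u'' : ℝ → Matrix (Fin n) (Fin n) ℝ)
    (hu' : ∀ x ∈ Set.Ici (0 : ℝ), ∀ i j,
      HasDerivWithinAt (fun t => u t i j) (u' x i j) (Set.Ici 0) x)
    (hu'' : ∀ x ∈ Set.Ici (0 : ℝ), ∀ i j,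
      HasDerivWithinAt (fun t => u' t i j) (u'' x i j) (Set.Ici 0) x)
    (hu_eq : ∀ x : ℝ, 0 ≤ x → -u'' x + v x * u x = lam • u x)
    (hu'0 : u' 0 = 0)
    (A B : Matrix (Fin n) (Fin n) ℂ)
    (hu_rep : ∀ x : ℝ, s < x →
      (u x).map (Complex.ofReal)
        = Complex.exp (Complex.I * k * x) • A + Complex.exp (-(Complex.I * k * x)) • B) :
    B = A.map (starRingEnd ℂ) ∧ Aᵀ * B = Bᵀ * A := by
  refine ⟨eq_map_conj_of_forall_map_ofReal_eq hk u hu_rep, ?_⟩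
  have hW : ∀ x ∈ Set.Ici (0 : ℝ), wronskian (u x) (u' x) = 0 := by
    refine wronskian_eq_zero_of_hasDerivWithinAt hu' hu'' (fun x hx => ?_)
      (by simp [wronskian, hu'0])
    rw [show u'' x = v x * u x - lam • u x by rw [← hu_eq x hx]; abel]
    exact wronskian_mul_sub_smul_self (hv_symm x) (u x) lam
  obtain ⟨x₀, hx₀s, hx₀⟩ : ∃ x₀, s < x₀ ∧ 0 < x₀ :=
    ⟨|s| + 1, by linarith [le_abs_self s], by positivity⟩
  have hu'x₀ := map_ofReal_eq_of_hasDerivAt hx₀s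
    (fun i j => (hu' x₀ hx₀.le i j).hasDerivAt (Ici_mem_nhds hx₀)) hu_rep
  have hWx₀ : wronskian ((u x₀).map ofReal) ((u' x₀).map ofReal) = 0 :=
    (wronskian_map ofRealHom _ _).symm.trans (by rw [hW x₀ hx₀.le, Matrix.map_zero _ (map_zero _)])
  rw [hu_rep x₀ hx₀s, hu'x₀, wronskian_smul_add_smul] at hWx₀
  have hscalar : 2 * (I * k) * exp (I * k * x₀) * exp (-(I * k * x₀)) ≠ 0 := by
    have : (k : ℂ) ≠ 0 := by exact_mod_cast hk.ne'
    simp [this, exp_ne_zero]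
  exact (sub_eq_zero.mp ((smul_eq_zero.mp hWx₀).resolve_left hscalar)).symm

/-- for the real matrix solution `u` of `-u'' + v u = k² u`, `u(0) = I`,
`u'(0) = 0`, written as `u = e^{ikx} A + e^{-ikx} B` beyond the support of `v`, one has
`B = conj A` and `AᵀB = BᵀA`. -/
theorem coefficients_conjugate_and_pseudo_commute (n : ℕ) (hn : 1 ≤ n)
    (s : ℝ) (hs : 0 < s)
    (v : ℝ → Matrix (Fin n) (Fin n) ℝ)
    (hv_cont : ∀ i j, Continuous fun x => v x i j)
    (hv_symm : ∀ x, (v x)ᵀ = v x)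
    (hv_supp : ∀ x : ℝ, s < x → v x = 0)
    (k : ℝ) (hk : 0 < k) (lam : ℝ) (hlam : lam = k ^ 2)
    (u u' u'' : ℝ → Matrix (Fin n) (Fin n) ℝ)
    (hu' : ∀ x ∈ Set.Ici (0 : ℝ), ∀ i j,
      HasDerivWithinAt (fun t => u t i j) (u' x i j) (Set.Ici 0) x)
    (hu'' : ∀ x ∈ Set.Ici (0 : ℝ), ∀ i j,
      HasDerivWithinAt (fun t => u' t i j) (u'' x i j) (Set.Ici 0) x)
    (hu_eq : ∀ x : ℝ, 0 ≤ x → -u'' x + v x * u x = lam • u x)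
    (hu0 : u 0 = 1) (hu'0 : u' 0 = 0)
    (A B : Matrix (Fin n) (Fin n) ℂ)
    (hu_rep : ∀ x : ℝ, s < x →
      (u x).map (Complex.ofReal)
        = Complex.exp (Complex.I * k * x) • A + Complex.exp (-(Complex.I * k * x)) • B) :
    B = A.map (starRingEnd ℂ) ∧ Aᵀ * B = Bᵀ * A :=
  coefficients_conjugate_and_pseudo_commute_general n s v hv_symm k hk lam u u' u'' hu' hu'' hu_eq
    hu'0 A B hu_rep
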